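/- Let N ≥ 1 and let p be a probability distribution on binary strings x = (x_1,…,x_N) ∈ {0,1}^N. For a prefix x_n = (x_1,…,x_n) with p(x_n) := Σ_{x_{n+1},…,x_N} p(x) > 0, let p(x_{n+1}|x_n) denote the conditional marginal p(x_{n+1} followed by prefix x_n)/p(x_n). Suppose that for each n ∈ {0,…,N−1} and each prefix x_n with p(x_n) > 0 one is given a number p'(0|x_n) ∈ [0,1] with |p'(0|x_n) − p(0|x_n)| ≤ ε, and set p'(1|x_n) := 1 − p'(0|x_n) (for prefixes of probability zero, p'(0|x_n) ∈ [0,1] is arbitrary). Define the distribution p'(x) := p'(x_1) p'(x_2|x_1) ⋯ p'(x_N|x_{N−1}). Then the total variation distance satisfies Σ_{x ∈ {0,1}^N} |p'(x) − p(x)| ≤ 2εN. In particular, if ε ≤ N^{−α} with α > 1, then Σ_x |p'(x) − p(x)| ≤ 2N^{1−α}. -/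

import Mathlib

/-!
Interpolate between `p'` and `p` through the hybrids
`Hₙ(x) = p(x₁ ⋯ xₙ) · p'(xₙ₊₁ ⋯ x_N | x₁ ⋯ xₙ)`, for which `H₀ = p'` and `H_N = p`.
Consecutive hybrids differ only in how coordinate `n + 1` is drawn. Summing out the `p'`-tail,
`Σ_x |Hₙ(x) - Hₙ₊₁(x)| = Σ_{x₁ ⋯ xₙ₊₁} |p(x₁ ⋯ xₙ) p'(xₙ₊₁ | x₁ ⋯ xₙ) - p(x₁ ⋯ xₙ₊₁)|`,
where both values of `xₙ₊₁` contribute the same term, at most `ε p(x₁ ⋯ xₙ)`. So each step costs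
at most `2ε`, and the triangle inequality over the `N` steps gives `2εN`.
-/

/-- `x` and `y` agree on their first `n` coordinates. -/
def PrefixAgree {N : ℕ} (n : ℕ) (x y : Fin N → Fin 2) : Prop :=
  ∀ i : Fin N, (i : ℕ) < n → x i = y i

instance {N n : ℕ} (x y : Fin N → Fin 2) : Decidable (PrefixAgree n x y) :=
  inferInstanceAs (Decidable (∀ i : Fin N, (i : ℕ) < n → x i = y i))

/-- The marginal probability of the length-`n` prefix of `x` under `p`:
the sum of `p y` over all strings `y` agreeing with `x` on the first `n` coordinates. -/
noncomputable def prefixMarg {N : ℕ} (p : (Fin N → Fin 2) → ℝ) (n : ℕ)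
    (x : Fin N → Fin 2) : ℝ :=
  ∑ y : Fin N → Fin 2, if PrefixAgree n x y then p y else 0

/-- Overwrite coordinate `n` of `x` with the value `v`. -/
def setCoord {N : ℕ} (x : Fin N → Fin 2) (n : ℕ) (v : Fin 2) : Fin N → Fin 2 :=
  fun i => if (i : ℕ) = n then v else x i

open Finset

section

variable {N : ℕ}

def PrefixDetermined (n : ℕ) (h : (Fin N → Fin 2) → ℝ) : Prop :=
  ∀ x y, PrefixAgree n x y → h x = h y

theorem PrefixAgree.mono {n m : ℕ} (hnm : n ≤ m) {x y : Fin N → Fin 2}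
    (h : PrefixAgree m x y) : PrefixAgree n x y :=
  fun i hi => h i (hi.trans_le hnm)

theorem PrefixDetermined.mono {n m : ℕ} (hnm : n ≤ m) {h : (Fin N → Fin 2) → ℝ}
    (hh : PrefixDetermined n h) : PrefixDetermined m h :=
  fun x y hxy => hh x y (hxy.mono hnm)

section Flip

def flipAt (n : ℕ) (x : Fin N → Fin 2) : Fin N → Fin 2 :=
  fun i => if (i : ℕ) = n then x i + 1 else x i

theorem flipAt_involutive (n : ℕ) : Function.Involutive (flipAt (N := N) n) := by
  intro x
  funext i
  have h : ∀ a : Fin 2, a + 1 + 1 = a := by decide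
  by_cases hi : (i : ℕ) = n <;> simp [flipAt, hi, h]

theorem prefixAgree_flipAt (n : ℕ) (x : Fin N → Fin 2) : PrefixAgree n x (flipAt n x) :=
  fun i hi => by simp [flipAt, hi.ne]

theorem flipAt_apply_self {n : ℕ} (hn : n < N) (x : Fin N → Fin 2) :
    flipAt n x ⟨n, hn⟩ = x ⟨n, hn⟩ + 1 := by
  simp [flipAt]

theorem sum_add_comp_flipAt (n : ℕ) (g : (Fin N → Fin 2) → ℝ) :
    ∑ x, (g x + g (flipAt n x)) = 2 * ∑ x, g x := by
  rw [sum_add_distrib, (flipAt_involutive n).bijective.sum_comp g]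
  ring

theorem setCoord_zero_eq_self_or_flipAt {n : ℕ} (hn : n < N) (x : Fin N → Fin 2) :
    setCoord x n 0 = x ∨ setCoord x n 0 = flipAt n x := by
  have hx : x ⟨n, hn⟩ = 0 ∨ x ⟨n, hn⟩ = 1 := by omega
  refine hx.imp (fun h0 => ?_) (fun h1 => ?_) <;> funext i <;>
    by_cases hi : (i : ℕ) = n <;> simp [setCoord, flipAt, hi]
  · obtain rfl : i = ⟨n, hn⟩ := Fin.ext hi
    exact h0.symm
  · obtain rfl : i = ⟨n, hn⟩ := Fin.ext hi
    rw [h1]; rfl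

end Flip

section Marginal

variable (p : (Fin N → Fin 2) → ℝ)

theorem prefixMarg_prefixDetermined (n : ℕ) : PrefixDetermined n (prefixMarg p n) := by
  intro x y hxy
  refine sum_congr rfl fun z _ => if_congr ⟨fun hz i hi => ?_, fun hz i hi => ?_⟩ rfl rfl
  · exact (hxy i hi).symm.trans (hz i hi)
  · exact (hxy i hi).trans (hz i hi)

theorem prefixMarg_nonneg (hp : ∀ x, 0 ≤ p x) (n : ℕ) (x : Fin N → Fin 2) :
    0 ≤ prefixMarg p n x :=
  sum_nonneg fun y _ => by split_ifs <;> simp [hp y]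

theorem prefixMarg_zero (x : Fin N → Fin 2) : prefixMarg p 0 x = ∑ y, p y :=
  sum_congr rfl fun _ _ => if_pos fun _ hi => absurd hi (Nat.not_lt_zero _)

theorem prefixMarg_self (x : Fin N → Fin 2) : prefixMarg p N x = p x := by
  have hiff : ∀ y, PrefixAgree N x y ↔ y = x :=
    fun y => ⟨fun h => funext fun i => (h i i.isLt).symm, fun h i _ => h ▸ rfl⟩
  simp only [prefixMarg, hiff, sum_ite_eq', mem_univ, if_true]

theorem prefixMarg_eq_add_flipAt {n : ℕ} (hn : n < N) (x : Fin N → Fin 2) :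
    prefixMarg p n x = prefixMarg p (n + 1) x + prefixMarg p (n + 1) (flipAt n x) := by
  simp only [prefixMarg, ← sum_add_distrib]
  refine sum_congr rfl fun y _ => ?_
  have hsucc : ∀ z, PrefixAgree (n + 1) z y ↔ PrefixAgree n z y ∧ z ⟨n, hn⟩ = y ⟨n, hn⟩ := by
    intro z
    refine ⟨fun h => ⟨h.mono n.le_succ, h _ n.lt_succ_self⟩, fun ⟨h, hn'⟩ i hi => ?_⟩
    rcases (Nat.lt_succ_iff.mp hi).lt_or_eq with hi | hi
    · exact h i hi
    · exact (show i = ⟨n, hn⟩ from Fin.ext hi) ▸ hn'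
  have hflip : PrefixAgree n (flipAt n x) y ↔ PrefixAgree n x y :=
    ⟨fun h i hi => (prefixAgree_flipAt n x i hi).trans (h i hi),
      fun h i hi => (prefixAgree_flipAt n x i hi).symm.trans (h i hi)⟩
  have hx : x ⟨n, hn⟩ = 0 ∨ x ⟨n, hn⟩ = 1 := by omega
  have hy : y ⟨n, hn⟩ = 0 ∨ y ⟨n, hn⟩ = 1 := by omega
  by_cases h : PrefixAgree n x y
  · rcases hx with hx | hx <;> rcases hy with hy | hy <;>
      simp [hsucc, hflip, h, flipAt_apply_self hn, hx, hy]
  · simp [hsucc, hflip, h]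

theorem prefixMarg_succ_le (hp : ∀ x, 0 ≤ p x) {n : ℕ} (hn : n < N) (x : Fin N → Fin 2) :
    prefixMarg p (n + 1) x ≤ prefixMarg p n x := by
  rw [prefixMarg_eq_add_flipAt p hn x]
  linarith [prefixMarg_nonneg p hp (n + 1) (flipAt n x)]

theorem sum_prefixMarg {m : ℕ} (hm : m ≤ N) :
    ∑ x, prefixMarg p m x = 2 ^ (N - m) * ∑ x, p x := by
  obtain ⟨d, hd⟩ : ∃ d, d = N - m := ⟨_, rfl⟩
  induction d generalizing m with
  | zero => simp [show m = N by omega, prefixMarg_self]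
  | succ d ih =>
    have hmN : m < N := by omega
    calc ∑ x, prefixMarg p m x
        = ∑ x, (prefixMarg p (m + 1) x + prefixMarg p (m + 1) (flipAt m x)) :=
          sum_congr rfl fun x _ => prefixMarg_eq_add_flipAt p hmN x
      _ = 2 * ∑ x, prefixMarg p (m + 1) x := sum_add_comp_flipAt m _
      _ = 2 ^ (N - m) * ∑ x, p x := by
          rw [ih hmN (by omega), show N - (m + 1) = d by omega, ← hd, pow_succ]
          ring

end Marginal

section Product

variable (f : ℕ → (Fin N → Fin 2) → ℝ)

/-- `p'(x_{n+1} | x_1 ⋯ x_n)`, the paper's coordinates being 1-based; `1` for `n ≥ N`. -/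
noncomputable def condProb (n : ℕ) (x : Fin N → Fin 2) : ℝ :=
  if h : n < N then (if x ⟨n, h⟩ = 0 then f n x else 1 - f n x) else 1

noncomputable def tailProb (m : ℕ) (x : Fin N → Fin 2) : ℝ :=
  ∏ i ∈ Ico m N, condProb f i x

theorem condProb_nonneg (hf01 : ∀ n x, 0 ≤ f n x ∧ f n x ≤ 1) (n : ℕ) (x : Fin N → Fin 2) :
    0 ≤ condProb f n x := by
  unfold condProb
  split_ifs <;> linarith [hf01 n x]

theorem tailProb_nonneg (hf01 : ∀ n x, 0 ≤ f n x ∧ f n x ≤ 1) (m : ℕ) (x : Fin N → Fin 2) :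
    0 ≤ tailProb f m x :=
  prod_nonneg fun i _ => condProb_nonneg f hf01 i x

theorem tailProb_zero (x : Fin N → Fin 2) :
    tailProb f 0 x = ∏ i : Fin N, if x i = 0 then f i x else 1 - f i x := by
  rw [tailProb, ← range_eq_Ico, ← Fin.prod_univ_eq_prod_range]
  exact prod_congr rfl fun i _ => dif_pos i.isLt

theorem tailProb_self (x : Fin N → Fin 2) : tailProb f N x = 1 := by
  simp [tailProb]

theorem tailProb_of_lt {m : ℕ} (hm : m < N) (x : Fin N → Fin 2) :
    tailProb f m x = condProb f m x * tailProb f (m + 1) x :=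
  prod_eq_prod_Ico_succ_bot hm _

variable {f}

theorem condProb_prefixDetermined (hf : ∀ n, PrefixDetermined n (f n)) (n : ℕ) :
    PrefixDetermined (n + 1) (condProb f n) := by
  intro x y hxy
  unfold condProb
  split
  · next hn => rw [hf n x y (hxy.mono n.le_succ), hxy ⟨n, hn⟩ n.lt_succ_self]
  · rfl

theorem condProb_flipAt (hf : ∀ n, PrefixDetermined n (f n)) {n : ℕ} (hn : n < N)
    (x : Fin N → Fin 2) : condProb f n (flipAt n x) = 1 - condProb f n x := by
  have hfx : f n (flipAt n x) = f n x := (hf n x _ (prefixAgree_flipAt n x)).symm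
  have hx : x ⟨n, hn⟩ = 0 ∨ x ⟨n, hn⟩ = 1 := by omega
  rcases hx with hx | hx <;> simp [condProb, hn, flipAt_apply_self hn, hfx, hx]

theorem two_mul_sum_mul_condProb (hf : ∀ n, PrefixDetermined n (f n)) {n : ℕ} (hn : n < N)
    {h : (Fin N → Fin 2) → ℝ} (hh : PrefixDetermined n h) :
    2 * ∑ x, h x * condProb f n x = ∑ x, h x := by
  rw [← sum_add_comp_flipAt n]
  refine sum_congr rfl fun x _ => ?_
  rw [condProb_flipAt hf hn, ← hh x _ (prefixAgree_flipAt n x)]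
  ring

theorem pow_mul_sum_mul_tailProb (hf : ∀ n, PrefixDetermined n (f n)) {m : ℕ} (hm : m ≤ N)
    {h : (Fin N → Fin 2) → ℝ} (hh : PrefixDetermined m h) :
    2 ^ (N - m) * ∑ x, h x * tailProb f m x = ∑ x, h x := by
  obtain ⟨d, hd⟩ : ∃ d, d = N - m := ⟨_, rfl⟩
  induction d generalizing m h with
  | zero => simp [show m = N by omega, tailProb_self]
  | succ d ih =>
    have hmN : m < N := by omega
    have hh' : PrefixDetermined (m + 1) (fun x => h x * condProb f m x) := fun x y hxy => by
      show h x * condProb f m x = h y * condProb f m y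
      rw [hh.mono m.le_succ x y hxy, condProb_prefixDetermined hf m x y hxy]
    calc 2 ^ (N - m) * ∑ x, h x * tailProb f m x
        = 2 * (2 ^ (N - (m + 1)) * ∑ x, (h x * condProb f m x) * tailProb f (m + 1) x) := by
          simp only [tailProb_of_lt f hmN, mul_assoc]
          rw [show N - m = N - (m + 1) + 1 by omega, pow_succ]
          ring
      _ = 2 * ∑ x, h x * condProb f m x := by rw [ih hmN hh' (by omega)]
      _ = ∑ x, h x := two_mul_sum_mul_condProb hf hmN hh

end Product

theorem abs_mul_sub_le_of_abs_sub_div_le {a b c ε : ℝ} (ha : 0 < a) (h : |c - b / a| ≤ ε) :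
    |a * c - b| ≤ ε * a := by
  rw [show a * c - b = a * (c - b / a) by field_simp, abs_mul, abs_of_pos ha, mul_comm]
  exact mul_le_mul_of_nonneg_right h ha.le

section Hybrid

variable (p : (Fin N → Fin 2) → ℝ) (f : ℕ → (Fin N → Fin 2) → ℝ)

noncomputable def hybrid (n : ℕ) (x : Fin N → Fin 2) : ℝ :=
  prefixMarg p n x * tailProb f n x

theorem hybrid_zero (hp : ∑ x, p x = 1) (x : Fin N → Fin 2) :
    hybrid p f 0 x = ∏ i : Fin N, if x i = 0 then f i x else 1 - f i x := by
  rw [hybrid, prefixMarg_zero, hp, one_mul, tailProb_zero]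

theorem hybrid_self (x : Fin N → Fin 2) : hybrid p f N x = p x := by
  rw [hybrid, prefixMarg_self, tailProb_self, mul_one]

variable {p f} {ε : ℝ}

/-- Both values of coordinate `n` give the same defect, so it may be computed at
`setCoord x n 0`, where the approximation hypothesis applies. -/
theorem abs_prefixMarg_mul_condProb_sub_le (hp : ∀ x, 0 ≤ p x)
    (hf : ∀ n, PrefixDetermined n (f n))
    (hf_approx : ∀ n, n < N → ∀ x, 0 < prefixMarg p n x →
      |f n x - prefixMarg p (n + 1) (setCoord x n 0) / prefixMarg p n x| ≤ ε)
    {n : ℕ} (hn : n < N) (x : Fin N → Fin 2) :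
    |prefixMarg p n x * condProb f n x - prefixMarg p (n + 1) x| ≤ ε * prefixMarg p n x := by
  set R := fun y => |prefixMarg p n y * condProb f n y - prefixMarg p (n + 1) y| with hR
  have hR_flip : R (flipAt n x) = R x := by
    have hmarg := prefixMarg_eq_add_flipAt p hn x
    simp only [hR, ← prefixMarg_prefixDetermined p n x _ (prefixAgree_flipAt n x),
      condProb_flipAt hf hn]
    rw [abs_sub_comm]
    congr 1
    linarith
  rcases (prefixMarg_nonneg p hp n x).eq_or_lt with h0 | hpos
  · have h1 : prefixMarg p (n + 1) x = 0 :=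
      le_antisymm (h0 ▸ prefixMarg_succ_le p hp hn x) (prefixMarg_nonneg p hp _ x)
    simp [← h0, h1]
  · set y := setCoord x n 0 with hy
    have hxy : PrefixAgree n x y := fun i hi => by simp [y, setCoord, hi.ne]
    have hRy : R y = R x := by
      rcases setCoord_zero_eq_self_or_flipAt hn x with h | h <;> rw [← hy] at h <;> rw [h]
      exact hR_flip
    have hcond : condProb f n y = f n x := by
      simp only [condProb, hn, ↓reduceDIte, setCoord, ↓reduceIte, y]
      exact (hf n x y hxy).symm
    have hmarg : prefixMarg p n y = prefixMarg p n x :=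
      (prefixMarg_prefixDetermined p n x y hxy).symm
    change R x ≤ _
    rw [← hRy]
    simp only [hR, hcond, hmarg]
    exact abs_mul_sub_le_of_abs_sub_div_le hpos (hf_approx n hn x hpos)

theorem sum_abs_hybrid_sub_hybrid_succ_le (hp : ∀ x, 0 ≤ p x) (hp_sum : ∑ x, p x = 1)
    (hf01 : ∀ n x, 0 ≤ f n x ∧ f n x ≤ 1) (hf : ∀ n, PrefixDetermined n (f n))
    (hf_approx : ∀ n, n < N → ∀ x, 0 < prefixMarg p n x →
      |f n x - prefixMarg p (n + 1) (setCoord x n 0) / prefixMarg p n x| ≤ ε)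
    {n : ℕ} (hn : n < N) :
    ∑ x, |hybrid p f n x - hybrid p f (n + 1) x| ≤ 2 * ε := by
  set R := fun x => |prefixMarg p n x * condProb f n x - prefixMarg p (n + 1) x| with hR
  have hR_det : PrefixDetermined (n + 1) R := fun x y hxy => by
    simp only [hR, prefixMarg_prefixDetermined p n x y (hxy.mono n.le_succ),
      prefixMarg_prefixDetermined p (n + 1) x y hxy, condProb_prefixDetermined hf n x y hxy]
  have hpoint : ∀ x, |hybrid p f n x - hybrid p f (n + 1) x| = R x * tailProb f (n + 1) x := by
    intro x
    rw [hybrid, hybrid, tailProb_of_lt f hn, ← mul_assoc, ← sub_mul, abs_mul,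
      abs_of_nonneg (tailProb_nonneg f hf01 (n + 1) x)]
  have hsumR : ∑ x, R x ≤ ε * 2 ^ (N - n) :=
    calc ∑ x, R x ≤ ∑ x, ε * prefixMarg p n x :=
          sum_le_sum fun x _ => abs_prefixMarg_mul_condProb_sub_le hp hf hf_approx hn x
      _ = ε * 2 ^ (N - n) := by rw [← mul_sum, sum_prefixMarg p hn.le, hp_sum, mul_one]
  have hpow : (2 : ℝ) ^ (N - n) = 2 ^ (N - (n + 1)) * 2 := by
    rw [← pow_succ]; congr 1; omega
  refine le_of_mul_le_mul_left ?_ (pow_pos two_pos (N - (n + 1)) : (0 : ℝ) < _)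
  calc 2 ^ (N - (n + 1)) * ∑ x, |hybrid p f n x - hybrid p f (n + 1) x|
      = ∑ x, R x := by
        simp only [hpoint]
        exact pow_mul_sum_mul_tailProb hf hn hR_det
    _ ≤ 2 ^ (N - (n + 1)) * (2 * ε) := by rw [hpow] at hsumR; linarith

end Hybrid

end

theorem mul_le_rpow_one_sub_of_le_rpow_neg {x ε α : ℝ} (hx : 0 ≤ x) (hα : α ≠ 1)
    (hε : ε ≤ x ^ (-α)) : ε * x ≤ x ^ (1 - α) := by
  rw [show 1 - α = -α + 1 by ring, Real.rpow_add' hx (by contrapose! hα; linarith),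
    Real.rpow_one]
  exact mul_le_mul_of_nonneg_right hε hx

theorem tv_bound_from_approximate_marginals_general (N : ℕ)
    (p : (Fin N → Fin 2) → ℝ)
    (hp_nonneg : ∀ x, 0 ≤ p x) (hp_sum : ∑ x, p x = 1)
    (ε : ℝ)
    (f : ℕ → (Fin N → Fin 2) → ℝ)
    (hf01 : ∀ n x, 0 ≤ f n x ∧ f n x ≤ 1)
    (hf_prefix : ∀ n x y, PrefixAgree n x y → f n x = f n y)
    (hf_approx : ∀ n, n < N → ∀ x, 0 < prefixMarg p n x →
      |f n x - prefixMarg p (n + 1) (setCoord x n 0) / prefixMarg p n x| ≤ ε) :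
    (∑ x, |(∏ i : Fin N, if x i = 0 then f i x else 1 - f i x) - p x| ≤ 2 * ε * N) ∧
    (∀ α : ℝ, 1 < α → ε ≤ (N : ℝ) ^ (-α) →
      ∑ x, |(∏ i : Fin N, if x i = 0 then f i x else 1 - f i x) - p x| ≤
        2 * (N : ℝ) ^ (1 - α)) := by
  have htv : ∑ x, |(∏ i : Fin N, if x i = 0 then f i x else 1 - f i x) - p x| ≤ 2 * ε * N :=
    calc ∑ x, |(∏ i : Fin N, if x i = 0 then f i x else 1 - f i x) - p x|
        = ∑ x, dist (hybrid p f 0 x) (hybrid p f N x) := by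
          simp only [hybrid_zero p f hp_sum, hybrid_self, Real.dist_eq]
      _ ≤ ∑ x, ∑ n ∈ range N, dist (hybrid p f n x) (hybrid p f (n + 1) x) :=
          sum_le_sum fun x _ => dist_le_range_sum_dist (hybrid p f · x) N
      _ = ∑ n ∈ range N, ∑ x, |hybrid p f n x - hybrid p f (n + 1) x| := by
          rw [sum_comm]
          simp only [Real.dist_eq]
      _ ≤ ∑ _n ∈ range N, 2 * ε := sum_le_sum fun n hn =>
          sum_abs_hybrid_sub_hybrid_succ_le hp_nonneg hp_sum hf01 hf_prefix hf_approx
            (mem_range.mp hn)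
      _ = 2 * ε * N := by rw [sum_const, card_range, nsmul_eq_mul, mul_comm]
  refine ⟨htv, fun α hα hε => ?_⟩
  linarith [mul_le_rpow_one_sub_of_le_rpow_neg N.cast_nonneg hα.ne' hε]

/-- **Lemma 1 (total variation bound from approximate conditional marginals).**
Let `p` be a probability distribution on `{0,1}^N` (`N ≥ 1`).  Suppose `f n x`
(representing `p'(0 | x_1 ⋯ x_n)`) lies in `[0,1]`, depends only on the first `n`
coordinates of `x`, and whenever the prefix marginal `p(x_1 ⋯ x_n)` is positive it
satisfies `|f n x − p(0 | x_1 ⋯ x_n)| ≤ ε`.  Define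
`p'(x) = Π_{n<N} (f n x if x_{n+1} = 0 else 1 − f n x)`.
Then `Σ_x |p'(x) − p(x)| ≤ 2εN`; in particular if `ε ≤ N^{−α}` with `α > 1` then
`Σ_x |p'(x) − p(x)| ≤ 2 N^{1−α}`. -/
theorem tv_bound_from_approximate_marginals (N : ℕ) (hN : 1 ≤ N)
    (p : (Fin N → Fin 2) → ℝ)
    (hp_nonneg : ∀ x, 0 ≤ p x) (hp_sum : ∑ x, p x = 1)
    (ε : ℝ)
    (f : ℕ → (Fin N → Fin 2) → ℝ)
    (hf01 : ∀ n x, 0 ≤ f n x ∧ f n x ≤ 1)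
    (hf_prefix : ∀ n x y, PrefixAgree n x y → f n x = f n y)
    (hf_approx : ∀ n, n < N → ∀ x, 0 < prefixMarg p n x →
      |f n x - prefixMarg p (n + 1) (setCoord x n 0) / prefixMarg p n x| ≤ ε) :
    (∑ x, |(∏ i : Fin N, if x i = 0 then f i x else 1 - f i x) - p x| ≤ 2 * ε * N) ∧
    (∀ α : ℝ, 1 < α → ε ≤ (N : ℝ) ^ (-α) →
      ∑ x, |(∏ i : Fin N, if x i = 0 then f i x else 1 - f i x) - p x| ≤
        2 * (N : ℝ) ^ (1 - α)) :=
  tv_bound_from_approximate_marginals_general N p hp_nonneg hp_sum ε f hf01 hf_prefix hf_approx
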